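/- arXiv:2509.10121 — 3 statements merged into one kernel-verified Lean document; each statement's English description precedes it below -/
import Mathlib

section
/- Let g be an analytic formal deformation of dimension n with associated algebras N_s and N := N_0. If for every real ε > 0 there exists a real s with 0 < s < ε such that N_s is defined and is a semisimple ring, then there exists a finite-dimensional semisimple ℂ-algebra A' with dim_ℂ A' = n such that the deformation is strongly flat from N to A'. -/
open scoped BigOperators

/-- The structure-constant power series `g i j l` specialised (analytically) at `t = s`. -/
noncomputable def fconst {n : ℕ} (g : Fin n → Fin n → Fin n → PowerSeries ℂ) (s : ℝ) :
    Fin n → Fin n → Fin n → ℂ :=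
  fun i j l => ∑' m : ℕ, (PowerSeries.coeff m) (g i j l) * (s : ℂ) ^ m

/-- An analytic formal deformation of dimension `n`: structure constants `g i j l ∈ ℂ⟦t⟧`
with geometrically bounded coefficients, satisfying the associativity law and possessing
a unit vector `u`. -/
structure AnalyticDeformation (n : ℕ) where
  g : Fin n → Fin n → Fin n → PowerSeries ℂ
  u : Fin n → ℂ
  conv : ∀ i j l, ∃ C r : ℝ, 0 < C ∧ 0 < r ∧
    ∀ m : ℕ, ‖(PowerSeries.coeff m) (g i j l)‖ ≤ C * r ^ m
  assoc : ∀ i j k m, ∑ l, g i j l * g l k m = ∑ l, g j k l * g i l m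
  unit_left : ∀ j l, ∑ i, u i • g i j l = if j = l then (1 : PowerSeries ℂ) else 0
  unit_right : ∀ j l, ∑ i, u i • g j i l = if j = l then (1 : PowerSeries ℂ) else 0

/-- `N_s` is defined: all the structure-constant series converge at `t = s`. -/
def AnalyticDeformation.DefinedAt {n : ℕ} (D : AnalyticDeformation n) (s : ℝ) : Prop :=
  ∀ i j l, Summable (fun m : ℕ => (PowerSeries.coeff m) (D.g i j l) * (s : ℂ) ^ m)

/-- A unital associative `R`-algebra `B` realizes the structure constants `c` if it has a
basis multiplying according to `c`; this expresses `B` being (isomorphic to) the algebra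
with underlying space `Fin n → R`, multiplication `(x*y) l = ∑ i j, x i * y j * c i j l`. -/
def RealizesAlgebra {n : ℕ} (R : Type*) [CommRing R] (c : Fin n → Fin n → Fin n → R)
    (B : Type*) [Ring B] [Algebra R B] : Prop :=
  ∃ e : Module.Basis (Fin n) R B, ∀ i j, e i * e j = ∑ l, c i j l • e l

/-- `N_s` is defined and isomorphic to `A` as a `ℂ`-algebra. -/
def AnalyticDeformation.IsoAt {n : ℕ} (D : AnalyticDeformation n) (s : ℝ)
    (A : Type*) [Ring A] [Algebra ℂ A] : Prop :=
  D.DefinedAt s ∧ RealizesAlgebra ℂ (fconst D.g s) A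

/-- The deformation is strongly flat from `N = N_0` to `A`. -/
def AnalyticDeformation.StronglyFlat {n : ℕ} (D : AnalyticDeformation n)
    (A : Type*) [Ring A] [Algebra ℂ A] : Prop :=
  ∀ ε : ℝ, 0 < ε → ∃ s : ℝ, 0 < s ∧ s < ε ∧ D.IsoAt s A

/-!
By Wedderburn–Artin over the algebraically closed field `ℂ`, every semisimple `N_s` is a product
of full matrix algebras `∏ᵢ M_{dᵢ}(ℂ)` with `∑ᵢ dᵢ² = n`. There are only finitely many such shapes,
so one of them occurs for `s` arbitrarily close to `0`, and that product of matrix algebras is `A'`.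
-/

open Filter Topology Module

theorem frequently_nhdsGT_zero_iff {p : ℝ → Prop} :
    (∃ᶠ s in 𝓝[>] 0, p s) ↔ ∀ ε : ℝ, 0 < ε → ∃ s : ℝ, 0 < s ∧ s < ε ∧ p s := by
  rw [(nhdsGT_basis (0 : ℝ)).frequently_iff]
  simp only [Set.mem_Ioo, and_assoc]

section RealizesAlgebra

variable {n : ℕ} {R : Type*} [CommRing R] {c : Fin n → Fin n → Fin n → R}
  {B : Type*} [Ring B] [Algebra R B]

theorem RealizesAlgebra.of_algEquiv {B' : Type*} [Ring B'] [Algebra R B']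
    (hB : RealizesAlgebra R c B) (f : B ≃ₐ[R] B') : RealizesAlgebra R c B' := by
  obtain ⟨b, hb⟩ := hB
  refine ⟨b.map f.toLinearEquiv, fun i j => ?_⟩
  simpa [Basis.map_apply, map_sum, map_smul] using congrArg f (hb i j)

theorem RealizesAlgebra.finite (hB : RealizesAlgebra R c B) : Module.Finite R B :=
  Module.Finite.of_basis hB.choose

theorem RealizesAlgebra.finrank_eq [StrongRankCondition R] (hB : RealizesAlgebra R c B) :
    finrank R B = n :=
  (finrank_eq_card_basis hB.choose).trans (Fintype.card_fin n)

end RealizesAlgebra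

theorem card_le_sum_sq_of_ne_zero {ι : Type*} [Fintype ι] {d : ι → ℕ} (hd : ∀ i, d i ≠ 0) :
    Fintype.card ι ≤ ∑ i, d i ^ 2 := by
  rw [Fintype.card_eq_sum_ones]
  exact Finset.sum_le_sum fun i _ => Nat.one_le_pow _ _ (Nat.pos_of_ne_zero (hd i))

theorem le_sum_sq {ι : Type*} [Fintype ι] (d : ι → ℕ) (i : ι) : d i ≤ ∑ j, d j ^ 2 :=
  (Nat.le_self_pow two_ne_zero (d i)).trans
    (Finset.single_le_sum (f := fun j => d j ^ 2) (fun _ _ => Nat.zero_le _) (Finset.mem_univ i))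

theorem finrank_pi_matrix (F : Type*) [Field F] {k : ℕ} (d : Fin k → ℕ) :
    finrank F (Π i, Matrix (Fin (d i)) (Fin (d i)) F) = ∑ i, d i ^ 2 := by
  simp [finrank_pi_fintype, Module.finrank_matrix, sq]

/-- Numbers of blocks and block sizes of a product of matrix algebras of dimension `n`, bounded by
`n` so that there are only finitely many shapes. -/
abbrev BlockShape (n : ℕ) := Σ k : Fin (n + 1), Fin k → Fin (n + 1)

abbrev BlockShape.Alg {n : ℕ} (σ : BlockShape n) (F : Type*) [Field F] :=
  Π i : Fin σ.1, Matrix (Fin (σ.2 i)) (Fin (σ.2 i)) F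

theorem IsSemisimpleRing.exists_blockShape_algEquiv (F R : Type*) [Field F] [IsAlgClosed F]
    [Ring R] [Algebra F R] [IsSemisimpleRing R] [FiniteDimensional F R] {n : ℕ}
    (hR : finrank F R = n) : ∃ σ : BlockShape n, Nonempty (R ≃ₐ[F] σ.Alg F) := by
  subst hR
  obtain ⟨k, d, hd, ⟨e⟩⟩ := IsSemisimpleRing.exists_algEquiv_pi_matrix_of_isAlgClosed F R
  have hsum : ∑ i, d i ^ 2 = finrank F R := by
    rw [← finrank_pi_matrix F d, e.toLinearEquiv.finrank_eq]
  have hk : k ≤ finrank F R := by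
    simpa [← hsum] using card_le_sum_sq_of_ne_zero fun i => (hd i).ne
  refine ⟨⟨⟨k, Nat.lt_succ_of_le hk⟩, fun i => ⟨d i, Nat.lt_succ_of_le (hsum ▸ le_sum_sq d i)⟩⟩,
    ⟨e⟩⟩

theorem AnalyticDeformation.IsoAt.exists_blockShape {n : ℕ} {D : AnalyticDeformation n} {s : ℝ}
    {B : Type*} [Ring B] [Algebra ℂ B] [IsSemisimpleRing B] (hB : D.IsoAt s B) :
    ∃ σ : BlockShape n, D.IsoAt s (σ.Alg ℂ) := by
  have := hB.2.finite
  obtain ⟨σ, ⟨e⟩⟩ := IsSemisimpleRing.exists_blockShape_algEquiv ℂ B hB.2.finrank_eq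
  exact ⟨σ, hB.1, hB.2.of_algEquiv e⟩

theorem strongly_flat_of_semisimple_specialisations_general {n : ℕ}
    (D : AnalyticDeformation n)
    (h : ∀ ε : ℝ, 0 < ε → ∃ s : ℝ, 0 < s ∧ s < ε ∧
      ∃ (B : Type) (_ : Ring B) (_ : Algebra ℂ B), IsSemisimpleRing B ∧ D.IsoAt s B) :
    ∃ (A' : Type) (_ : Ring A') (_ : Algebra ℂ A'),
      IsSemisimpleRing A' ∧ FiniteDimensional ℂ A' ∧ Module.finrank ℂ A' = n ∧
        D.StronglyFlat A' := by
  have hshape : ∃ᶠ s in 𝓝[>] 0, ∃ σ : BlockShape n, D.IsoAt s (σ.Alg ℂ) :=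
    (frequently_nhdsGT_zero_iff.mpr h).mono fun s ⟨B, _, _, _, hB⟩ => hB.exists_blockShape
  obtain ⟨σ, hσ⟩ := frequently_exists.mp hshape
  obtain ⟨s, hs⟩ := hσ.exists
  exact ⟨σ.Alg ℂ, inferInstance, inferInstance, inferInstance, inferInstance,
    hs.2.finrank_eq, frequently_nhdsGT_zero_iff.mp hσ⟩

/-- if at arbitrarily small `s > 0` the specialisation `N_s` is defined and
semisimple, then the deformation is strongly flat to some semisimple `ℂ`-algebra `A'`
of dimension `n`. -/
theorem strongly_flat_of_semisimple_specialisations {n : ℕ} (hn : 1 ≤ n)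
    (D : AnalyticDeformation n)
    (h : ∀ ε : ℝ, 0 < ε → ∃ s : ℝ, 0 < s ∧ s < ε ∧
      ∃ (B : Type) (_ : Ring B) (_ : Algebra ℂ B), IsSemisimpleRing B ∧ D.IsoAt s B) :
    ∃ (A' : Type) (_ : Ring A') (_ : Algebra ℂ A'),
      IsSemisimpleRing A' ∧ FiniteDimensional ℂ A' ∧ Module.finrank ℂ A' = n ∧
        D.StronglyFlat A' :=
  strongly_flat_of_semisimple_specialisations_general D h
end

section
/- Let g be an analytic formal deformation of dimension n with associated algebras N_s and N := N_0, let K be the field of fractions of the ring R̄ of power series convergent near 0, and let E be the associated K-algebra of dimension n. Suppose the deformation is strongly flat from N to a finite-dimensional semisimple ℂ-algebra A with dim_ℂ A = n. Then for every integer j ≥ 1, the dimension of I'_j(A) as a ℂ-vector space equals the dimension of I'_j(E) as a K-vector space. -/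
open scoped BigOperators

/-- The subring of `ℂ⟦t⟧` of power series with geometrically bounded coefficients,
i.e. the power series convergent on some interval containing `0`. -/
noncomputable def Rbar : Subring (PowerSeries ℂ) where
  carrier := {h | ∃ C r : ℝ, 0 < C ∧ 0 < r ∧
    ∀ m : ℕ, ‖(PowerSeries.coeff m) h‖ ≤ C * r ^ m}
  zero_mem' := ⟨1, 1, one_pos, one_pos, fun m => by simp⟩
  one_mem' := ⟨1, 1, one_pos, one_pos, fun m => by
    rw [PowerSeries.coeff_one]
    split <;> simp⟩
  add_mem' := by
    rintro a b ⟨C1, r1, hC1, hr1, h1⟩ ⟨C2, r2, hC2, hr2, h2⟩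
    refine ⟨C1 + C2, max r1 r2, by positivity, lt_max_of_lt_left hr1, fun m => ?_⟩
    have h1' : ‖(PowerSeries.coeff m) a‖ ≤ C1 * (max r1 r2) ^ m :=
      (h1 m).trans (by
        have := pow_le_pow_left₀ hr1.le (le_max_left r1 r2) m
        nlinarith)
    have h2' : ‖(PowerSeries.coeff m) b‖ ≤ C2 * (max r1 r2) ^ m :=
      (h2 m).trans (by
        have := pow_le_pow_left₀ hr2.le (le_max_right r1 r2) m
        nlinarith)
    calc ‖(PowerSeries.coeff m) (a + b)‖
        ≤ ‖(PowerSeries.coeff m) a‖ + ‖(PowerSeries.coeff m) b‖ := by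
          rw [map_add]; exact norm_add_le _ _
      _ ≤ C1 * (max r1 r2) ^ m + C2 * (max r1 r2) ^ m := add_le_add h1' h2'
      _ = (C1 + C2) * (max r1 r2) ^ m := by ring
  neg_mem' := by
    rintro a ⟨C, r, hC, hr, hb⟩
    exact ⟨C, r, hC, hr, fun m => by simpa using hb m⟩
  mul_mem' := by
    rintro a b ⟨C1, r1, hC1, hr1, h1⟩ ⟨C2, r2, hC2, hr2, h2⟩
    set R := max r1 r2 with hR
    have hRpos : 0 < R := lt_max_of_lt_left hr1
    refine ⟨C1 * C2, 2 * R, by positivity, by positivity, fun m => ?_⟩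
    have key : ∀ p ∈ Finset.HasAntidiagonal.antidiagonal m,
        ‖(PowerSeries.coeff p.1) a * (PowerSeries.coeff p.2) b‖ ≤ C1 * C2 * R ^ m := by
      rintro ⟨p, q⟩ hpq
      have hpq' : p + q = m := Finset.HasAntidiagonal.mem_antidiagonal.mp hpq
      have hp : ‖(PowerSeries.coeff p) a‖ ≤ C1 * R ^ p :=
        (h1 p).trans (by
          have := pow_le_pow_left₀ hr1.le (le_max_left r1 r2) p
          nlinarith)
      have hq : ‖(PowerSeries.coeff q) b‖ ≤ C2 * R ^ q :=
        (h2 q).trans (by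
          have := pow_le_pow_left₀ hr2.le (le_max_right r1 r2) q
          nlinarith)
      calc ‖(PowerSeries.coeff p) a * (PowerSeries.coeff q) b‖
          = ‖(PowerSeries.coeff p) a‖ * ‖(PowerSeries.coeff q) b‖ := norm_mul _ _
        _ ≤ (C1 * R ^ p) * (C2 * R ^ q) := by
            apply mul_le_mul hp hq (norm_nonneg _)
            positivity
        _ = C1 * C2 * R ^ (p + q) := by rw [pow_add]; ring
        _ = C1 * C2 * R ^ m := by rw [hpq']
    calc ‖(PowerSeries.coeff m) (a * b)‖
        = ‖∑ p ∈ Finset.HasAntidiagonal.antidiagonal m,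
            (PowerSeries.coeff p.1) a * (PowerSeries.coeff p.2) b‖ := by
          rw [PowerSeries.coeff_mul]
      _ ≤ ∑ p ∈ Finset.HasAntidiagonal.antidiagonal m,
            ‖(PowerSeries.coeff p.1) a * (PowerSeries.coeff p.2) b‖ :=
          norm_sum_le _ _
      _ ≤ ∑ _p ∈ Finset.HasAntidiagonal.antidiagonal m, C1 * C2 * R ^ m := Finset.sum_le_sum key
      _ = (m + 1 : ℝ) * (C1 * C2 * R ^ m) := by
          rw [Finset.sum_const, Finset.Nat.card_antidiagonal]
          ring
      _ ≤ (2 : ℝ) ^ m * (C1 * C2 * R ^ m) := by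
          have h2m : (m + 1 : ℝ) ≤ (2 : ℝ) ^ m := by
            have := Nat.lt_two_pow_self (n := m)
            have : (m + 1 : ℕ) ≤ 2 ^ m := this
            calc (m + 1 : ℝ) = ((m + 1 : ℕ) : ℝ) := by push_cast; ring
              _ ≤ ((2 ^ m : ℕ) : ℝ) := by exact_mod_cast this
              _ = (2 : ℝ) ^ m := by push_cast; ring
          have hpos : (0 : ℝ) ≤ C1 * C2 * R ^ m := by positivity
          nlinarith
      _ = C1 * C2 * (2 * R) ^ m := by rw [mul_pow]; ring

/-- `K`, the field of fractions of the ring of convergent power series. -/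
abbrev Kfield : Type := FractionRing Rbar

noncomputable example : Field Kfield := inferInstance

/-- The structure constants of `E`, viewed in `K`. -/
noncomputable def AnalyticDeformation.gK {n : ℕ} (D : AnalyticDeformation n) :
    Fin n → Fin n → Fin n → Kfield :=
  fun i j l => algebraMap Rbar Kfield ⟨D.g i j l, D.conv i j l⟩

/-- An evaluation of the standard polynomial of degree `2*j` in the ring `R`. -/
noncomputable def stdPolyEval (R : Type*) [Ring R] (j : ℕ) (x : Fin (2 * j) → R) : R :=
  ∑ σ : Equiv.Perm (Fin (2 * j)),
    (Equiv.Perm.sign σ : ℤ) • ((List.finRange (2 * j)).map fun i => x (σ i)).prod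

/-- `I'_j(R)`: the two-sided ideal of `R` generated by all evaluations of the standard
polynomial of degree `2*j`, realised as the `F`-linear span of `a * s_{2j}(x) * b`. -/
noncomputable def stdIdeal (F : Type*) [Field F] (R : Type*) [Ring R] [Algebra F R]
    (j : ℕ) : Submodule F R :=
  Submodule.span F {y : R | ∃ (a b : R) (x : Fin (2 * j) → R), y = a * stdPolyEval R j x * b}

/-! Both dimensions are ranks of one matrix `stdGenMatrix` whose entries are universal
polynomials in the structure constants; its columns are the coordinates of the spanning
elements `e p * s_{2j}(e ∘ x) * e q` of `I'_j`. Its minors built from the `g i j l` are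
convergent power series: such a minor vanishes in `K` iff it is the zero series, and
evaluating it at `t = s` gives the corresponding minor of `N_s`. A nonzero convergent series
has an isolated zero at `0`, so a maximal nonvanishing minor over `K` stays nonvanishing at
every small `s > 0`, while a minor vanishing over `K` vanishes at every `s`. Strong flatness
provides such an `s` with `N_s ≅ A`. -/

open Filter Topology PowerSeries FormalMultilinearSeries Matrix

lemma radius_ofScalars_coeff_pos {h : PowerSeries ℂ} (hh : h ∈ Rbar) :
    0 < (ofScalars ℂ fun m => coeff m h).radius := by
  obtain ⟨C, r, -, hr, hb⟩ := hh
  lift r to NNReal using hr.le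
  have hbound (m : ℕ) :
      ‖ofScalars ℂ (fun m => coeff m h) m‖ * ((r⁻¹ : NNReal) : ℝ) ^ m ≤ C := by
    rw [ofScalars_norm, NNReal.coe_inv, inv_pow]
    calc ‖coeff m h‖ * ((r : ℝ) ^ m)⁻¹ ≤ C * r ^ m * ((r : ℝ) ^ m)⁻¹ := by
          gcongr; exact hb m
      _ = C := by field_simp
  exact lt_of_lt_of_le (by simpa using hr)
    (le_radius_of_bound (𝕜 := ℂ) (E := ℂ) (F := ℂ) _ C hbound)

lemma tendsto_ofReal_nhdsGT_nhdsNE : Tendsto ((↑) : ℝ → ℂ) (𝓝[>] 0) (𝓝[≠] 0) := by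
  simpa using Complex.continuous_ofReal.continuousWithinAt.tendsto_nhdsWithin
    (x := (0 : ℝ)) (s := Set.Ioi 0) (t := {0}ᶜ) fun s hs => by simpa using hs.ne'

lemma eventually_summable_norm_coeff_mul_pow {h : PowerSeries ℂ} (hh : h ∈ Rbar) :
    ∀ᶠ z in 𝓝 (0 : ℂ), Summable fun m => ‖coeff m h * z ^ m‖ := by
  filter_upwards [Metric.eball_mem_nhds (0 : ℂ) (radius_ofScalars_coeff_pos hh)] with z hz
  simpa [ofScalars_apply_eq, mul_comm] using
    summable_norm_apply (𝕜 := ℂ) (E := ℂ) (F := ℂ) _ hz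

lemma eventually_tsum_coeff_mul_pow_ne_zero {h : PowerSeries ℂ} (hh : h ∈ Rbar) (h0 : h ≠ 0) :
    ∀ᶠ z in 𝓝[≠] (0 : ℂ), ∑' m, coeff m h * z ^ m ≠ 0 := by
  have hp : ofScalars ℂ (fun m => coeff m h) ≠ 0 := by
    rw [Ne, ofScalars_series_eq_zero]
    exact fun hc => h0 (PowerSeries.ext fun m => congrFun hc m)
  have := ((ofScalars ℂ fun m => coeff m h).hasFPowerSeriesOnBall
    (radius_ofScalars_coeff_pos hh)).hasFPowerSeriesAt.locally_ne_zero hp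
  simpa [FormalMultilinearSeries.sum, ofScalars_apply_eq, mul_comm] using this

lemma coeff_mul_mul_pow {R : Type*} [CommSemiring R] (a b : PowerSeries R) (z : R) (m : ℕ) :
    coeff m (a * b) * z ^ m = ∑ p ∈ Finset.HasAntidiagonal.antidiagonal m,
      (coeff p.1 a * z ^ p.1) * (coeff p.2 b * z ^ p.2) := by
  rw [coeff_mul, Finset.sum_mul]
  refine Finset.sum_congr rfl fun p hp => ?_
  rw [← Finset.HasAntidiagonal.mem_antidiagonal.1 hp, pow_add]
  ring

noncomputable def absConvSubring (z : ℂ) : Subring (PowerSeries ℂ) where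
  carrier := {h | Summable fun m => ‖coeff m h * z ^ m‖}
  zero_mem' := by simp [summable_zero]
  one_mem' := summable_of_ne_finset_zero (s := {0}) fun m hm => by
    simp [coeff_one, Finset.mem_singleton.not.1 hm]
  add_mem' {a b} ha hb := .of_nonneg_of_le (fun _ => norm_nonneg _)
    (fun m => by simpa only [map_add, add_mul] using norm_add_le _ _) (ha.add hb)
  neg_mem' := by simp
  mul_mem' {a b} ha hb := by
    simpa only [Set.mem_ofPred_eq, coeff_mul_mul_pow] using
      summable_norm_sum_mul_antidiagonal_of_summable_norm ha hb

noncomputable def absConvSubring.eval (z : ℂ) : absConvSubring z →+* ℂ where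
  toFun h := ∑' m, coeff m (h : PowerSeries ℂ) * z ^ m
  map_zero' := by simp
  map_one' := by
    rw [tsum_eq_single 0 fun m hm => by simp [coeff_one, hm]]
    simp
  map_add' a b := by
    simp only [Subring.coe_add, map_add, add_mul]
    exact a.2.of_norm.tsum_add b.2.of_norm
  map_mul' a b := by
    simp only [Subring.coe_mul, coeff_mul_mul_pow]
    exact (tsum_mul_tsum_eq_tsum_sum_antidiagonal_of_summable_norm a.2 b.2).symm

lemma map_stdPolyEval {R S F : Type*} [Ring R] [Ring S] [FunLike F R S] [RingHomClass F R S]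
    (f : F) (j : ℕ) (x : Fin (2 * j) → R) :
    f (stdPolyEval R j x) = stdPolyEval S j (fun i => f (x i)) := by
  simp [stdPolyEval, map_list_prod, List.map_map, Function.comp_def]

noncomputable def stdPolyMultilinear (F B : Type*) [Field F] [Ring B] [Algebra F B] (m : ℕ) :
    MultilinearMap F (fun _ : Fin m => B) B :=
  ∑ σ : Equiv.Perm (Fin m),
    (Equiv.Perm.sign σ : ℤ) • (MultilinearMap.mkPiAlgebraFin F m B).domDomCongr σ

lemma stdPolyMultilinear_apply (F B : Type*) [Field F] [Ring B] [Algebra F B] (j : ℕ)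
    (x : Fin (2 * j) → B) : stdPolyMultilinear F B (2 * j) x = stdPolyEval B j x := by
  simp only [stdPolyMultilinear, stdPolyEval, _root_.sum_apply, _root_.smul_apply,
    MultilinearMap.domDomCongr_apply, MultilinearMap.mkPiAlgebraFin_apply, List.ofFn_eq_map]

lemma MultilinearMap.apply_mem_span_range_basis {R M N ι κ : Type*} [CommSemiring R]
    [AddCommMonoid M] [Module R M] [AddCommMonoid N] [Module R N] [Fintype ι] [DecidableEq ι]
    [Fintype κ] (f : MultilinearMap R (fun _ : ι => M) N) (b : Module.Basis κ R M)
    (x : ι → M) :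
    f x ∈ Submodule.span R (Set.range fun r : ι → κ => f fun i => b (r i)) := by
  have hx : x = fun i => ∑ k, b.repr (x i) k • b k := funext fun i => (b.sum_repr (x i)).symm
  rw [hx, f.map_sum]
  exact Submodule.sum_mem _ fun r _ => by
    rw [f.map_smul_univ]
    exact Submodule.smul_mem _ _ (Submodule.subset_span ⟨r, rfl⟩)

section StructureConstants

variable {ι R : Type*} [Fintype ι] [DecidableEq ι] [CommRing R] (c : ι → ι → ι → R)

/-- For a basis `e` with structure constants `c`, the matrix of left multiplication by `e i`
(`leftMulMatrix_basis`). -/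
def structMatrix (i : ι) : Matrix ι ι R := Matrix.of fun l l' => c i l' l

/-- Column `x` holds the coordinates of `stdIdealGen e j x` (`repr_stdIdealGen`). -/
noncomputable def stdGenMatrix (j : ℕ) : Matrix ι (ι × ι × (Fin (2 * j) → ι)) R :=
  Matrix.of fun l x =>
    (structMatrix c x.1 * stdPolyEval _ j (fun k => structMatrix c (x.2.2 k))) l x.2.1

variable {S : Type*} [CommRing S] (φ : R →+* S)

lemma stdGenMatrix_map (j : ℕ) :
    stdGenMatrix (fun a b d => φ (c a b d)) j = (stdGenMatrix c j).map φ := by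
  ext l x
  have hstruct (i : ι) :
      structMatrix (fun a b d => φ (c a b d)) i = φ.mapMatrix (structMatrix c i) := rfl
  simp only [stdGenMatrix, of_apply, map_apply, hstruct, ← map_stdPolyEval, ← map_mul]
  rfl

lemma det_submatrix_stdGenMatrix_map (j : ℕ) {k : ℕ} (r : Fin k → ι)
    (x : Fin k → ι × ι × (Fin (2 * j) → ι)) :
    ((stdGenMatrix (fun a b d => φ (c a b d)) j).submatrix r x).det =
      φ ((stdGenMatrix c j).submatrix r x).det := by
  rw [stdGenMatrix_map, submatrix_map, RingHom.map_det]
  rfl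

end StructureConstants

section Basis

variable {ι F B : Type*} [Fintype ι] [Field F] [Ring B] [Algebra F B] (e : Module.Basis ι F B)

noncomputable def stdIdealGen (j : ℕ) (x : ι × ι × (Fin (2 * j) → ι)) : B :=
  e x.1 * stdPolyEval B j (fun k => e (x.2.2 k)) * e x.2.1

lemma stdIdeal_eq_span_stdIdealGen (j : ℕ) :
    stdIdeal F B j = Submodule.span F (Set.range (stdIdealGen e j)) := by
  refine le_antisymm (Submodule.span_le.2 ?_)
    (Submodule.span_le.2 fun _ ⟨x, hx⟩ => Submodule.subset_span ⟨_, _, _, hx.symm⟩)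
  rintro _ ⟨a, b, x, rfl⟩
  have hbasis (p q : ι) :
      e p * stdPolyEval B j x * e q ∈ Submodule.span F (Set.range (stdIdealGen e j)) := by
    have hx := (stdPolyMultilinear F B (2 * j)).apply_mem_span_range_basis e x
    simp only [stdPolyMultilinear_apply] at hx
    refine Submodule.map_span_le (LinearMap.mulLeftRight F (e p, e q)) _ _ |>.2 ?_
      (Submodule.mem_map_of_mem hx)
    rintro _ ⟨r, rfl⟩
    exact Submodule.subset_span ⟨(p, q, r), rfl⟩
  rw [← e.sum_repr a, ← e.sum_repr b, Finset.sum_mul, Finset.sum_mul]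
  refine Submodule.sum_mem _ fun p _ => ?_
  rw [Finset.mul_sum]
  refine Submodule.sum_mem _ fun q _ => ?_
  rw [smul_mul_assoc, smul_mul_assoc, mul_smul_comm]
  exact Submodule.smul_mem _ _ (Submodule.smul_mem _ _ (hbasis p q))

variable [DecidableEq ι] {c : ι → ι → ι → F}

lemma leftMulMatrix_basis (hmul : ∀ i j, e i * e j = ∑ l, c i j l • e l) (i : ι) :
    Algebra.leftMulMatrix e (e i) = structMatrix c i := by
  ext l l'
  rw [Algebra.leftMulMatrix_eq_repr_mul, hmul, e.repr_sum_self]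
  rfl

lemma repr_stdIdealGen (hmul : ∀ i j, e i * e j = ∑ l, c i j l • e l) (j : ℕ)
    (x : ι × ι × (Fin (2 * j) → ι)) (l : ι) :
    e.repr (stdIdealGen e j x) l = stdGenMatrix c j l x := by
  rw [stdIdealGen, ← Algebra.leftMulMatrix_eq_repr_mul, map_mul, map_stdPolyEval]
  simp only [leftMulMatrix_basis e hmul]
  rfl

lemma finrank_stdIdeal_eq_rank (hmul : ∀ i j, e i * e j = ∑ l, c i j l • e l) (j : ℕ) :
    Module.finrank F (stdIdeal F B j) = (stdGenMatrix c j).rank := by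
  have hcols : e.equivFun ∘ stdIdealGen e j = (stdGenMatrix c j).col :=
    funext₂ fun x l => repr_stdIdealGen e hmul j x l
  rw [stdIdeal_eq_span_stdIdealGen e, rank_eq_finrank_span_cols, ← hcols, Set.range_comp,
    ← e.equivFun.finrank_map_eq, Submodule.map_span]
  rfl

end Basis

namespace Matrix

variable {m n F : Type*} [Fintype n] [Field F]

lemma exists_linearIndependent_rows [Fintype m] (M : Matrix m n F) {k : ℕ} (hk : M.rank = k) :
    ∃ r : Fin k → m, LinearIndependent F (M.submatrix r id).row := by
  obtain ⟨κ, a, ha, hspan, hli⟩ := exists_linearIndependent' F M.row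
  have := Finite.of_injective a ha
  cases nonempty_fintype κ
  have hcard : Fintype.card κ = k := by
    rw [← hk, rank_eq_finrank_span_row, ← hspan, finrank_span_eq_card hli]
  exact ⟨a ∘ (Fintype.equivFinOfCardEq hcard).symm, hli.comp _ (Equiv.injective _)⟩

lemma exists_det_submatrix_ne_zero [Fintype m] (M : Matrix m n F) :
    ∃ (r : Fin M.rank → m) (c : Fin M.rank → n), (M.submatrix r c).det ≠ 0 := by
  obtain ⟨c, hc⟩ := Mᵀ.exists_linearIndependent_rows (rank_transpose M)
  have hcols : (M.submatrix id c).rank = M.rank := by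
    rw [← rank_transpose, transpose_submatrix, hc.rank_matrix, Fintype.card_fin]
  obtain ⟨r, hr⟩ := (M.submatrix id c).exists_linearIndependent_rows hcols
  refine ⟨r, c, ?_⟩
  rw [submatrix_submatrix, linearIndependent_rows_iff_isUnit, isUnit_iff_isUnit_det] at hr
  exact hr.ne_zero

lemma le_rank_of_det_submatrix_ne_zero (M : Matrix m n F)
    {k : ℕ} (r : Fin k → m) (c : Fin k → n) (h : (M.submatrix r c).det ≠ 0) :
    k ≤ M.rank := by
  simpa [rank_of_det_ne_zero h] using rank_submatrix_le M r c

end Matrix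

namespace AnalyticDeformation

variable {n : ℕ} (D : AnalyticDeformation n)

def gR : Fin n → Fin n → Fin n → Rbar := fun i j l => ⟨D.g i j l, D.conv i j l⟩

lemma det_submatrix_stdGenMatrix_gK_ne_zero_iff (j : ℕ) {k : ℕ} (r : Fin k → Fin n)
    (x : Fin k → Fin n × Fin n × (Fin (2 * j) → Fin n)) :
    ((stdGenMatrix D.gK j).submatrix r x).det ≠ 0 ↔
      ((stdGenMatrix D.g j).submatrix r x).det ≠ 0 := by
  rw [show D.gK = fun a b d => algebraMap Rbar Kfield (D.gR a b d) from rfl,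
    show D.g = fun a b d => Rbar.subtype (D.gR a b d) from rfl,
    det_submatrix_stdGenMatrix_map, det_submatrix_stdGenMatrix_map,
    map_ne_zero_iff _ (IsFractionRing.injective Rbar Kfield),
    map_ne_zero_iff _ Subtype.val_injective]

lemma det_submatrix_stdGenMatrix_mem_Rbar (j : ℕ) {k : ℕ} (r : Fin k → Fin n)
    (x : Fin k → Fin n × Fin n × (Fin (2 * j) → Fin n)) :
    ((stdGenMatrix D.g j).submatrix r x).det ∈ Rbar := by
  rw [show D.g = fun a b d => Rbar.subtype (D.gR a b d) from rfl, det_submatrix_stdGenMatrix_map]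
  exact SetLike.coe_mem _

lemma det_submatrix_stdGenMatrix_fconst {s : ℝ} (hs : ∀ i j l, D.g i j l ∈ absConvSubring s)
    (j : ℕ) {k : ℕ} (r : Fin k → Fin n)
    (x : Fin k → Fin n × Fin n × (Fin (2 * j) → Fin n)) :
    ((stdGenMatrix (fconst D.g s) j).submatrix r x).det =
      ∑' m, coeff m ((stdGenMatrix D.g j).submatrix r x).det * (s : ℂ) ^ m := by
  let gS : Fin n → Fin n → Fin n → absConvSubring s := fun a b d => ⟨D.g a b d, hs a b d⟩
  rw [show fconst D.g s = fun a b d => absConvSubring.eval s (gS a b d) from rfl,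
    show D.g = fun a b d => (absConvSubring s).subtype (gS a b d) from rfl,
    det_submatrix_stdGenMatrix_map, det_submatrix_stdGenMatrix_map]
  rfl

lemma eventually_mem_absConvSubring :
    ∀ᶠ s : ℝ in 𝓝[>] 0, ∀ i j l, D.g i j l ∈ absConvSubring s := by
  simp only [eventually_all]
  exact fun i j l => tendsto_ofReal_nhdsGT_nhdsNE.eventually
    ((eventually_summable_norm_coeff_mul_pow (D.conv i j l)).filter_mono nhdsWithin_le_nhds)

lemma StronglyFlat.frequently_isoAt {A : Type*} [Ring A] [Algebra ℂ A] (h : D.StronglyFlat A) :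
    ∃ᶠ s in 𝓝[>] (0 : ℝ), D.IsoAt s A := by
  rw [(nhdsGT_basis 0).frequently_iff]
  intro ε hε
  obtain ⟨s, hs0, hsε, hiso⟩ := h ε hε
  exact ⟨s, ⟨hs0, hsε⟩, hiso⟩

end AnalyticDeformation

theorem dim_stdIdeal_eq_general {n : ℕ} (D : AnalyticDeformation n)
    (A : Type*) [Ring A] [Algebra ℂ A]
    (hflat : D.StronglyFlat A)
    (E : Type*) [Ring E] [Algebra Kfield E]
    (hE : RealizesAlgebra Kfield D.gK E)
    (j : ℕ) :
    Module.finrank ℂ (stdIdeal ℂ A j) = Module.finrank Kfield (stdIdeal Kfield E j) := by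
  obtain ⟨eE, hmulE⟩ := hE
  obtain ⟨r, x, hrx⟩ := (stdGenMatrix D.gK j).exists_det_submatrix_ne_zero
  have hP := (D.det_submatrix_stdGenMatrix_gK_ne_zero_iff j r x).1 hrx
  have hPs : ∀ᶠ s : ℝ in 𝓝[>] 0,
      ∑' m, coeff m ((stdGenMatrix D.g j).submatrix r x).det * (s : ℂ) ^ m ≠ 0 :=
    tendsto_ofReal_nhdsGT_nhdsNE.eventually
      (eventually_tsum_coeff_mul_pow_ne_zero (D.det_submatrix_stdGenMatrix_mem_Rbar j r x) hP)
  obtain ⟨s, ⟨-, eA, hmulA⟩, hconv, hPs⟩ :=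
    (hflat.frequently_isoAt.and_eventually (D.eventually_mem_absConvSubring.and hPs)).exists
  rw [finrank_stdIdeal_eq_rank eA hmulA, finrank_stdIdeal_eq_rank eE hmulE]
  refine le_antisymm ?_ ?_
  · obtain ⟨r', x', h'⟩ := (stdGenMatrix (fconst D.g s) j).exists_det_submatrix_ne_zero
    rw [D.det_submatrix_stdGenMatrix_fconst hconv] at h'
    refine (stdGenMatrix D.gK j).le_rank_of_det_submatrix_ne_zero r' x'
      ((D.det_submatrix_stdGenMatrix_gK_ne_zero_iff j r' x').2 fun h0 => ?_)
    simp [h0] at h'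
  · refine (stdGenMatrix (fconst D.g s) j).le_rank_of_det_submatrix_ne_zero r x ?_
    rwa [D.det_submatrix_stdGenMatrix_fconst hconv]

/-- under a strongly flat deformation to a semisimple algebra `A`,
`dim_ℂ I'_j(A) = dim_K I'_j(E)` for every `j ≥ 1`. -/
theorem dim_stdIdeal_eq {n : ℕ} (hn : 1 ≤ n) (D : AnalyticDeformation n)
    (A : Type*) [Ring A] [Algebra ℂ A] [IsSemisimpleRing A] [FiniteDimensional ℂ A]
    (hA : Module.finrank ℂ A = n) (hflat : D.StronglyFlat A)
    (E : Type*) [Ring E] [Algebra Kfield E]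
    (hE : RealizesAlgebra Kfield D.gK E)
    (j : ℕ) (hj : 1 ≤ j) :
    Module.finrank ℂ (stdIdeal ℂ A j) = Module.finrank Kfield (stdIdeal Kfield E j) :=
  dim_stdIdeal_eq_general D A hflat E hE j
end

section
/- Let g be an analytic formal deformation of dimension n with associated algebras N_s and N := N_0. Suppose there exist elements x, y ∈ N such that N is spanned as a ℂ-vector space by the set {x^i : i ∈ ℕ} ∪ {y * x^i : i ∈ ℕ} (powers and products taken in N). Let A be a finite-dimensional semisimple ℂ-algebra with dim_ℂ A = n for which there exists a surjective ℂ-algebra homomorphism from A onto the matrix algebra Matrix (Fin j) (Fin j) ℂ for some j ≥ 3. Then the deformation is not strongly flat from N to A. -/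
open scoped BigOperators

/-!
Having a basis made of words `x ^ i`, `y * x ^ i` is an open condition on the structure constants:
if such words span `N₀`, then `n` of them form a basis, their coordinates are polynomials in the
structure constants, so the determinant of their coordinate matrix stays nonzero for small `s`.
Hence an algebra `A` realizing `N_s` for small `s > 0` is spanned by words in two elements, and so
is every quotient of `A`. This fails for `Mat_j(ℂ)` with `j ≥ 3`: by Cayley–Hamilton the powers of
`X` span at most `j` dimensions, so the words in `X`, `Y` span at most `2 j < j ^ 2` dimensions.
-/

def twoGenWord {M : Type*} [Monoid M] (x y : M) : ℕ ⊕ ℕ → M :=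
  Sum.elim (x ^ ·) (fun i => y * x ^ i)

section TwoGeneratorWords

open Polynomial Submodule Set Module

theorem range_twoGenWord {M : Type*} [Monoid M] (x y : M) :
    range (twoGenWord x y) = {z | ∃ i : ℕ, z = x ^ i} ∪ {z | ∃ i : ℕ, z = y * x ^ i} := by
  simp only [twoGenWord, Set.Sum.elim_range]
  congr 1 <;> ext <;> simp [eq_comm]

theorem span_range_twoGenWord_map_eq_top {R A B : Type*} [CommSemiring R] [Semiring A]
    [Semiring B] [Algebra R A] [Algebra R B] (f : A →ₐ[R] B) (hf : Function.Surjective f)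
    {x y : A} (h : span R (range (twoGenWord x y)) = ⊤) :
    span R (range (twoGenWord (f x) (f y))) = ⊤ := by
  have hcomp : twoGenWord (f x) (f y) = f ∘ twoGenWord x y := by
    ext (i | i) <;> simp [twoGenWord]
  rw [hcomp, range_comp, ← AlgHom.coe_toLinearMap, span_image, h, Submodule.map_top,
    LinearMap.range_eq_top]
  exact hf

theorem pow_mem_span_pow_lt_natDegree {R S : Type*} [CommRing R] [Nontrivial R] [Ring S]
    [Algebra R S] {p : R[X]} (hp : p.Monic) {a : S} (hpa : aeval a p = 0) (k : ℕ) :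
    a ^ k ∈ span R (range fun i : Fin p.natDegree => a ^ (i : ℕ)) := by
  classical
  have hmod : X ^ k %ₘ p ∈ degreeLT R p.natDegree := by
    rw [mem_degreeLT, ← degree_eq_natDegree hp.ne_zero]
    exact degree_modByMonic_lt _ hp
  have := mem_map_of_mem (f := (aeval (R := R) a).toLinearMap) hmod
  rw [degreeLT_eq_span_X_pow, map_span] at this
  rw [← aeval_X_pow (R := R), ← aeval_modByMonic_eq_self_of_root hpa]
  convert this using 2
  · ext z
    simp [Fin.exists_iff]
  · rfl

theorem finrank_span_range_pow_le {K S : Type*} [Field K] [Ring S] [Algebra K S]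
    {p : K[X]} (hp : p.Monic) {a : S} (hpa : aeval a p = 0) :
    finrank K (span K (range (a ^ · : ℕ → S))) ≤ p.natDegree := by
  have := FiniteDimensional.span_of_finite K (finite_range fun i : Fin p.natDegree => a ^ (i : ℕ))
  calc finrank K (span K (range (a ^ · : ℕ → S)))
      ≤ finrank K (span K (range fun i : Fin p.natDegree => a ^ (i : ℕ))) :=
        Submodule.finrank_mono <| span_le.mpr <| range_subset_iff.mpr <|
          pow_mem_span_pow_lt_natDegree hp hpa
    _ ≤ p.natDegree := (finrank_range_le_card _).trans_eq (Fintype.card_fin _)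

theorem finrank_span_range_twoGenWord_le {K S : Type*} [Field K] [Ring S] [Algebra K S]
    [FiniteDimensional K S] (x y : S) :
    finrank K (span K (range (twoGenWord x y))) ≤
      2 * finrank K (span K (range (x ^ · : ℕ → S))) := by
  set P := span K (range (x ^ · : ℕ → S))
  have hspan : span K (range (twoGenWord x y)) = P ⊔ P.map (LinearMap.mulLeft K y) := by
    rw [twoGenWord, Set.Sum.elim_range, span_union, map_span, ← range_comp]
    rfl
  rw [hspan, two_mul]
  exact (Submodule.finrank_add_le_finrank_add_finrank _ _).trans
    (Nat.add_le_add_left (finrank_map_le _ _) _)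

theorem Matrix.span_range_twoGenWord_ne_top {K m : Type*} [Field K] [Fintype m] [DecidableEq m]
    (hm : 3 ≤ Fintype.card m) (X Y : Matrix m m K) :
    span K (range (twoGenWord X Y)) ≠ ⊤ := by
  intro htop
  have hle := (finrank_span_range_twoGenWord_le X Y).trans <| Nat.mul_le_mul_left 2 <|
    finrank_span_range_pow_le X.charpoly_monic X.aeval_self_charpoly
  rw [htop, finrank_top, finrank_matrix, finrank_self, X.charpoly_natDegree_eq_dim] at hle
  nlinarith

end TwoGeneratorWords

section StructureConstants

open Module

variable {R ι : Type*} [CommRing R] [Fintype ι]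

def structMul (c : ι → ι → ι → R) (v w : ι → R) : ι → R :=
  fun l => ∑ i, ∑ k, v i * w k * c i k l

/-- Coordinates of `x ^ k`, computed from the structure constants `c` and the coordinates `u`
of `1` and `v` of `x`. -/
def structPow (c : ι → ι → ι → R) (u v : ι → R) : ℕ → ι → R
  | 0 => u
  | k + 1 => structMul c v (structPow c u v k)

def structWord (c : ι → ι → ι → R) (u a b : ι → R) : ℕ ⊕ ℕ → ι → R :=
  Sum.elim (structPow c u a) (fun i => structMul c b (structPow c u a i))

def wordMatrix {κ : Type*} (c : ι → ι → ι → R) (u a b : ι → R) (τ : κ → ℕ ⊕ ℕ) :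
    Matrix ι κ R :=
  .of fun l k => structWord c u a b (τ k) l

theorem structMul_of_isLeftUnit [DecidableEq ι] {c : ι → ι → ι → R} {u : ι → R}
    (hu : ∀ k l, ∑ i, u i * c i k l = if k = l then 1 else 0) (v : ι → R) :
    structMul c u v = v := by
  ext l
  calc structMul c u v l = ∑ k, v k * ∑ i, u i * c i k l := by
        rw [structMul, Finset.sum_comm]
        refine Finset.sum_congr rfl fun k _ => ?_
        rw [Finset.mul_sum]
        exact Finset.sum_congr rfl fun i _ => by ring
    _ = v l := by simp [hu]

theorem continuous_wordMatrix [TopologicalSpace R] [IsTopologicalRing R] {κ : Type*}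
    (u a b : ι → R) (τ : κ → ℕ ⊕ ℕ) :
    Continuous fun c : ι → ι → ι → R => wordMatrix c u a b τ := by
  have hmul : ∀ v, ∀ {w : (ι → ι → ι → R) → ι → R}, Continuous w →
      Continuous fun c => structMul c v (w c) := by
    intro v w hw
    unfold structMul
    fun_prop
  have hpow : ∀ k, Continuous fun c => structPow c u a k := by
    intro k
    induction k with
    | zero => exact continuous_const
    | succ k ih => exact hmul a ih
  have hword : ∀ t, Continuous fun c => structWord c u a b t := by
    rintro (i | i)
    · exact hpow i
    · exact hmul b (hpow i)
  exact continuous_matrix fun l k => (continuous_apply l).comp (hword (τ k))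

variable {B : Type*} [Ring B] [Algebra R B] {e : Basis ι R B} {c : ι → ι → ι → R}

theorem Module.Basis.equivFun_mul (hc : ∀ i j, e i * e j = ∑ l, c i j l • e l) (p q : B) :
    e.equivFun (p * q) = structMul c (e.equivFun p) (e.equivFun q) := by
  classical
  ext l
  conv_lhs => rw [← e.sum_equivFun p, ← e.sum_equivFun q]
  simp only [Finset.sum_mul, Finset.mul_sum, smul_mul_smul_comm, hc, Finset.smul_sum, smul_smul,
    map_sum, map_smul, Finset.sum_apply, Pi.smul_apply, Basis.equivFun_self, smul_eq_mul, mul_ite,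
    mul_one, mul_zero, Finset.sum_ite_eq', Finset.mem_univ, if_true, structMul]
  exact Finset.sum_comm

theorem Module.Basis.equivFun_one [DecidableEq ι] (hc : ∀ i j, e i * e j = ∑ l, c i j l • e l)
    {u : ι → R} (hu : ∀ k l, ∑ i, u i * c i k l = if k = l then 1 else 0) :
    e.equivFun 1 = u := by
  have h := e.equivFun_mul hc (e.equivFun.symm u) 1
  rwa [mul_one, LinearEquiv.apply_symm_apply, structMul_of_isLeftUnit hu, eq_comm] at h

theorem Module.Basis.equivFun_twoGenWord [DecidableEq ι]
    (hc : ∀ i j, e i * e j = ∑ l, c i j l • e l)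
    {u : ι → R} (hu : ∀ k l, ∑ i, u i * c i k l = if k = l then 1 else 0) (x y : B)
    (t : ℕ ⊕ ℕ) :
    e.equivFun (twoGenWord x y t) = structWord c u (e.equivFun x) (e.equivFun y) t := by
  have hpow : ∀ k, e.equivFun (x ^ k) = structPow c u (e.equivFun x) k := by
    intro k
    induction k with
    | zero => exact pow_zero x ▸ e.equivFun_one hc hu
    | succ k ih => rw [pow_succ', e.equivFun_mul hc, ih, structPow]
  rcases t with i | i
  · exact hpow i
  · exact (e.equivFun_mul hc _ _).trans (congrArg _ (hpow i))

theorem Module.Basis.det_twoGenWord_comp [DecidableEq ι]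
    (hc : ∀ i j, e i * e j = ∑ l, c i j l • e l)
    {u : ι → R} (hu : ∀ k l, ∑ i, u i * c i k l = if k = l then 1 else 0) (x y : B)
    (τ : ι → ℕ ⊕ ℕ) :
    e.det (twoGenWord x y ∘ τ) = (wordMatrix c u (e.equivFun x) (e.equivFun y) τ).det := by
  rw [e.det_apply]
  congr 1
  ext l k
  rw [e.toMatrix_apply, ← e.equivFun_apply, Function.comp_apply, e.equivFun_twoGenWord hc hu]
  rfl

end StructureConstants

section BasisFromSpanningFamily

open Submodule Set Module

variable {K V ι κ : Type*} [Field K] [AddCommGroup V] [Module K V] [Fintype ι] [DecidableEq ι]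

theorem Module.Basis.exists_isUnit_det_comp (e : Basis ι K V) {v : κ → V}
    (hv : span K (range v) = ⊤) : ∃ τ : ι → κ, IsUnit (e.det (v ∘ τ)) := by
  obtain ⟨κ', a, -, hspan, hli⟩ := exists_linearIndependent' K v
  let σ := e.indexEquiv (Basis.mk hli (by rw [hspan, hv]))
  refine ⟨a ∘ σ, (is_basis_iff_det e).mp ⟨hli.comp σ σ.injective, ?_⟩⟩
  rw [← Function.comp_assoc, σ.surjective.range_comp, hspan, hv]

theorem Module.Basis.span_range_eq_top_of_isUnit_det_comp (e : Basis ι K V) {v : κ → V}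
    {τ : ι → κ} (h : IsUnit (e.det (v ∘ τ))) : span K (range v) = ⊤ :=
  top_unique <| ((is_basis_iff_det e).mpr h).2.symm.le.trans <|
    span_mono (range_comp_subset_range τ v)

end BasisFromSpanningFamily

section Analytic

open Metric

theorem continuousAt_tsum_mul_pow {a : ℕ → ℂ} {C r : ℝ} (hr : 0 < r)
    (ha : ∀ m, ‖a m‖ ≤ C * r ^ m) : ContinuousAt (fun z : ℂ => ∑' m, a m * z ^ m) 0 := by
  refine ContinuousOn.continuousAt (s := closedBall 0 (2 * r)⁻¹) ?_
    (closedBall_mem_nhds _ (by positivity))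
  have hsum : Summable fun m : ℕ => C * (2⁻¹ : ℝ) ^ m :=
    (summable_geometric_of_lt_one (by norm_num) (by norm_num)).mul_left C
  refine continuousOn_tsum (fun m => (continuous_const.mul (continuous_pow m)).continuousOn)
    hsum fun m z hz => ?_
  rw [mem_closedBall, dist_zero_right] at hz
  calc ‖a m * z ^ m‖ = ‖a m‖ * ‖z‖ ^ m := by rw [norm_mul, norm_pow]
    _ ≤ C * r ^ m * (2 * r)⁻¹ ^ m :=
        mul_le_mul (ha m) (pow_le_pow_left₀ (norm_nonneg _) hz m) (by positivity)
          ((norm_nonneg _).trans (ha m))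
    _ = C * 2⁻¹ ^ m := by
        rw [mul_assoc, ← mul_pow]
        congr 2
        field_simp

namespace AnalyticDeformation

variable {n : ℕ} (D : AnalyticDeformation n)

theorem continuousAt_fconst : ContinuousAt (fconst D.g) 0 := by
  refine continuousAt_pi.mpr fun i => continuousAt_pi.mpr fun j => continuousAt_pi.mpr fun l => ?_
  obtain ⟨C, r, -, hr, hg⟩ := D.conv i j l
  have h := continuousAt_tsum_mul_pow hr hg
  rw [← Complex.ofReal_zero] at h
  exact h.comp Complex.continuous_ofReal.continuousAt

theorem definedAt_zero : D.DefinedAt 0 :=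
  fun i j l => summable_of_ne_finset_zero (s := {0}) fun m hm => by
    simp [zero_pow (Finset.notMem_singleton.mp hm)]

theorem sum_unit_mul_fconst {s : ℝ} (hs : D.DefinedAt s) (j l : Fin n) :
    ∑ i, D.u i * fconst D.g s i j l = if j = l then 1 else 0 := by
  calc ∑ i, D.u i * fconst D.g s i j l
      = ∑' m, PowerSeries.coeff m (∑ i, D.u i • D.g i j l) * (s : ℂ) ^ m := by
        simp only [fconst, ← tsum_mul_left]
        rw [← Summable.tsum_finsetSum fun i _ => (hs i j l).mul_left _]
        simp [map_sum, Finset.sum_mul, mul_assoc]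
    _ = if j = l then 1 else 0 := by
        rw [D.unit_left]
        split_ifs <;> simp [PowerSeries.coeff_one]

end AnalyticDeformation

end Analytic

theorem not_strongly_flat_of_large_matrix_summand_general {n : ℕ}
    (D : AnalyticDeformation n)
    (N0 : Type*) [Ring N0] [Algebra ℂ N0] (hN0 : RealizesAlgebra ℂ (fconst D.g 0) N0)
    (x y : N0)
    (hspan : Submodule.span ℂ
        ({z : N0 | ∃ i : ℕ, z = x ^ i} ∪ {z : N0 | ∃ i : ℕ, z = y * x ^ i}) = ⊤)
    (A : Type*) [Ring A] [Algebra ℂ A]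
    (j : ℕ) (hj : 3 ≤ j)
    (f : A →ₐ[ℂ] Matrix (Fin j) (Fin j) ℂ) (hf : Function.Surjective f) :
    ¬ D.StronglyFlat A := by
  intro hflat
  obtain ⟨e₀, he₀⟩ := hN0
  obtain ⟨τ, hτ⟩ := e₀.exists_isUnit_det_comp (v := twoGenWord x y) (by rwa [range_twoGenWord])
  rw [e₀.det_twoGenWord_comp he₀ (D.sum_unit_mul_fconst D.definedAt_zero)] at hτ
  set a := e₀.equivFun x
  set b := e₀.equivFun y
  have hdet : ContinuousAt (fun s => (wordMatrix (fconst D.g s) D.u a b τ).det) 0 :=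
    ((continuous_wordMatrix D.u a b τ).matrix_det.continuousAt).comp D.continuousAt_fconst
  obtain ⟨ε, hε, hnear⟩ := Metric.eventually_nhds_iff.mp (hdet.eventually_ne hτ.ne_zero)
  obtain ⟨s, hs0, hsε, hdef, eₛ, heₛ⟩ := hflat ε hε
  have hunit : IsUnit (eₛ.det (twoGenWord (eₛ.equivFun.symm a) (eₛ.equivFun.symm b) ∘ τ)) := by
    rw [eₛ.det_twoGenWord_comp heₛ (D.sum_unit_mul_fconst hdef), LinearEquiv.apply_symm_apply,
      LinearEquiv.apply_symm_apply]
    exact isUnit_iff_ne_zero.mpr (hnear (by rwa [Real.dist_0_eq_abs, abs_of_pos hs0]))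
  exact Matrix.span_range_twoGenWord_ne_top (by simpa using hj) _ _ <|
    span_range_twoGenWord_map_eq_top f hf (eₛ.span_range_eq_top_of_isUnit_det_comp hunit)

/-- if `N = N_0` is spanned by `{x^i} ∪ {y * x^i}` and the semisimple algebra
`A` has a matrix algebra of size `j ≥ 3` as a quotient, then the deformation is not
strongly flat from `N` to `A`. -/
theorem not_strongly_flat_of_large_matrix_summand {n : ℕ} (hn : 1 ≤ n)
    (D : AnalyticDeformation n)
    (N0 : Type*) [Ring N0] [Algebra ℂ N0] (hN0 : RealizesAlgebra ℂ (fconst D.g 0) N0)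
    (x y : N0)
    (hspan : Submodule.span ℂ
        ({z : N0 | ∃ i : ℕ, z = x ^ i} ∪ {z : N0 | ∃ i : ℕ, z = y * x ^ i}) = ⊤)
    (A : Type*) [Ring A] [Algebra ℂ A] [IsSemisimpleRing A] [FiniteDimensional ℂ A]
    (hA : Module.finrank ℂ A = n)
    (j : ℕ) (hj : 3 ≤ j)
    (f : A →ₐ[ℂ] Matrix (Fin j) (Fin j) ℂ) (hf : Function.Surjective f) :
    ¬ D.StronglyFlat A :=
  not_strongly_flat_of_large_matrix_summand_general D N0 hN0 x y hspan A j hj f hf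
end
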